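/- If n₁ ≥ 3 and n₂ ≥ 3 are relatively prime integers, then the semi-active cop number of the Cartesian product of the two cycles satisfies c^-(C_{n₁} □ C_{n₂}) = 2. -/

import Mathlib

open SimpleGraph

variable {V : Type*}

/-- `SemiActiveCanCatch G n cops r` : in the semi-active game (each cop may move to an
adjacent vertex or stay put; the robber must move to an adjacent vertex on each of
his turns), the cops can force a capture within `n` further rounds. -/
def SemiActiveCanCatch (G : SimpleGraph V) {k : ℕ} : ℕ → (Fin k → V) → V → Prop
  | 0, cops, r => ∃ i, cops i = r
  | n + 1, cops, r => (∃ i, cops i = r) ∨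
      ∃ cops' : Fin k → V, (∀ i, cops' i = cops i ∨ G.Adj (cops i) (cops' i)) ∧
        ((∃ i, cops' i = r) ∨
          ∀ r', G.Adj r r' → SemiActiveCanCatch G n cops' r')

/-- The semi-active cop number `c⁻(G)`. -/
noncomputable def semiActiveCopNumber (G : SimpleGraph V) : ℕ :=
  sInf {k : ℕ | ∃ cops : Fin k → V, ∀ r : V, ∃ n : ℕ, SemiActiveCanCatch G n cops r}

/-- The cycle `C_n` on `n` vertices (for `n ≥ 3`), realized on `ZMod n`. -/
def cycleG (n : ℕ) : SimpleGraph (ZMod n) where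
  Adj x y := x ≠ y ∧ (x - y = 1 ∨ y - x = 1)
  symm := ⟨by rintro x y ⟨h, h'⟩; exact ⟨h.symm, h'.symm⟩⟩
  loopless := ⟨by rintro x ⟨h, -⟩; exact h rfl⟩

namespace Statement17
variable {n₁ n₂ : ℕ}
def va (n₁ n₂ : ℕ) : ZMod n₁ × ZMod n₂ := (1, 0)
def vb (n₁ n₂ : ℕ) : ZMod n₁ × ZMod n₂ := (0, 1)
def vu (n₁ n₂ : ℕ) : ZMod n₁ × ZMod n₂ := (1, 1)
def uP (n₁ n₂ s : ℕ) : ZMod n₁ × ZMod n₂ := ((s : ZMod n₁), (s : ZMod n₂))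

lemma one_ne_zero' (h : 3 ≤ n₁) : (1 : ZMod n₁) ≠ 0 := by
  haveI : Fact (1 < n₁) := ⟨by omega⟩
  exact one_ne_zero

lemma cyc_adj_add_one (h : 3 ≤ n₁) (x : ZMod n₁) : (cycleG n₁).Adj x (x + 1) := by
  refine ⟨?_, Or.inr (by ring)⟩
  intro hx
  exact one_ne_zero' h (by linear_combination -hx)

lemma cyc_adj_sub_one (h : 3 ≤ n₁) (x : ZMod n₁) : (cycleG n₁).Adj x (x - 1) := by
  refine ⟨?_, Or.inl (by ring)⟩
  intro hx
  exact one_ne_zero' h (by linear_combination hx)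

lemma adj_iff (h1 : 3 ≤ n₁) (h2 : 3 ≤ n₂) {r r' : ZMod n₁ × ZMod n₂} :
    (cycleG n₁ □ cycleG n₂).Adj r r' ↔
      r' = r + va n₁ n₂ ∨ r' = r - va n₁ n₂ ∨ r' = r + vb n₁ n₂ ∨ r' = r - vb n₁ n₂ := by
  rw [boxProd_adj]
  constructor
  · rintro (⟨⟨hne, hd | hd⟩, he⟩ | ⟨⟨hne, hd | hd⟩, he⟩)
    · exact Or.inr (Or.inl (by simp [va, Prod.ext_iff, ← he]; linear_combination -hd))
    · exact Or.inl (by simp [va, Prod.ext_iff, ← he]; linear_combination hd)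
    · exact Or.inr (Or.inr (Or.inr (by simp [vb, Prod.ext_iff, ← he]; linear_combination -hd)))
    · exact Or.inr (Or.inr (Or.inl (by simp [vb, Prod.ext_iff, ← he]; linear_combination hd)))
  · rintro (h | h | h | h) <;> subst h
    · exact Or.inl ⟨cyc_adj_add_one h1 _, by simp [va]⟩
    · exact Or.inl ⟨cyc_adj_sub_one h1 _, by simp [va]⟩
    · exact Or.inr ⟨cyc_adj_add_one h2 _, by simp [vb]⟩
    · exact Or.inr ⟨cyc_adj_sub_one h2 _, by simp [vb]⟩

lemma adj_add_va (h1 : 3 ≤ n₁) (h2 : 3 ≤ n₂) (x : ZMod n₁ × ZMod n₂) :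
    (cycleG n₁ □ cycleG n₂).Adj x (x + va n₁ n₂) := (adj_iff h1 h2).mpr (Or.inl rfl)
lemma adj_sub_va (h1 : 3 ≤ n₁) (h2 : 3 ≤ n₂) (x : ZMod n₁ × ZMod n₂) :
    (cycleG n₁ □ cycleG n₂).Adj x (x - va n₁ n₂) := (adj_iff h1 h2).mpr (Or.inr (Or.inl rfl))
lemma adj_add_vb (h1 : 3 ≤ n₁) (h2 : 3 ≤ n₂) (x : ZMod n₁ × ZMod n₂) :
    (cycleG n₁ □ cycleG n₂).Adj x (x + vb n₁ n₂) := (adj_iff h1 h2).mpr (Or.inr (Or.inr (Or.inl rfl)))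
lemma adj_sub_vb (h1 : 3 ≤ n₁) (h2 : 3 ≤ n₂) (x : ZMod n₁ × ZMod n₂) :
    (cycleG n₁ □ cycleG n₂).Adj x (x - vb n₁ n₂) := (adj_iff h1 h2).mpr (Or.inr (Or.inr (Or.inr rfl)))

lemma catch_step {G : SimpleGraph V} {n : ℕ} {cops cops' : Fin 2 → V} {r : V}
    (hleg : ∀ i, cops' i = cops i ∨ G.Adj (cops i) (cops' i))
    (h : (∃ i, cops' i = r) ∨ ∀ r', G.Adj r r' → SemiActiveCanCatch G n cops' r') :
    SemiActiveCanCatch G (n+1) cops r :=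
  Or.inr ⟨cops', hleg, h⟩

lemma gen (h1 : 3 ≤ n₁) (h2 : 3 ≤ n₂) (hco : Nat.Coprime n₁ n₂)
    (z : ZMod n₁ × ZMod n₂) : ∃ s : ℕ, s < n₁ * n₂ ∧ uP n₁ n₂ s = z := by
  haveI : NeZero n₁ := ⟨by omega⟩
  haveI : NeZero n₂ := ⟨by omega⟩
  obtain ⟨c, hc1, hc2⟩ := Nat.chineseRemainder hco z.1.val z.2.val
  refine ⟨c % (n₁ * n₂), Nat.mod_lt _ (by positivity), ?_⟩
  have d1 : c % (n₁ * n₂) ≡ z.1.val [MOD n₁] :=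
    (((Nat.mod_modEq c (n₁*n₂)).of_dvd ⟨n₂, rfl⟩)).trans hc1
  have d2 : c % (n₁ * n₂) ≡ z.2.val [MOD n₂] :=
    (((Nat.mod_modEq c (n₁*n₂)).of_dvd ⟨n₁, Nat.mul_comm _ _⟩)).trans hc2
  have e1 : ((c % (n₁*n₂) : ℕ) : ZMod n₁) = z.1 := by
    rw [(ZMod.natCast_eq_natCast_iff _ _ _).mpr d1, ZMod.natCast_rightInverse]
  have e2 : ((c % (n₁*n₂) : ℕ) : ZMod n₂) = z.2 := by
    rw [(ZMod.natCast_eq_natCast_iff _ _ _).mpr d2, ZMod.natCast_rightInverse]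
  exact Prod.ext e1 e2

lemma rep1 (h1 : 3 ≤ n₁) (h2 : 3 ≤ n₂) (hco : Nat.Coprime n₁ n₂)
    (z : ZMod n₁ × ZMod n₂) : ∃ t : ℕ, t < n₁ * n₂ ∧ uP n₁ n₂ (t+1) = z := by
  obtain ⟨s, hs, hz⟩ := gen h1 h2 hco z
  match s, hz with
  | 0, hz =>
      refine ⟨n₁ * n₂ - 1, by omega, ?_⟩
      have hB : n₁ * n₂ - 1 + 1 = n₁ * n₂ := by omega
      rw [hB, ← hz]
      simp [uP]
  | (t+1), hz => exact ⟨t, by omega, hz⟩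

/-- The main pursuit lemma. -/
lemma hunt (h1 : 3 ≤ n₁) (h2 : 3 ≤ n₂) (hco : Nat.Coprime n₁ n₂) (Φ : ℕ) :
    ∀ (t k : ℕ) (r c₁ c₂ : ZMod n₁ × ZMod n₂),
      r = c₁ + uP n₁ n₂ (t+1) → c₂ = r + uP n₁ n₂ (k+1) → t + (n₁*n₂) * k ≤ Φ →
      ∀ r', (cycleG n₁ □ cycleG n₂).Adj r r' →
        SemiActiveCanCatch (cycleG n₁ □ cycleG n₂) (Φ+1) ![c₁, c₂] r' := by
  have hB : 1 ≤ n₁ * n₂ := Nat.one_le_iff_ne_zero.mpr (by positivity)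
  induction Φ with
  | zero =>
    intro t k r c₁ c₂ hI1 hI2 hpot r' hadj
    have ht : t = 0 := by omega
    have hk : k = 0 := by nlinarith
    subst ht; subst hk
    rcases (adj_iff h1 h2).mp hadj with hm | hm | hm | hm <;> subst hm
    · -- r + va = c₂ - vb : cop2 captures
      refine catch_step (cops' := ![c₁, r + va n₁ n₂]) ?_ (Or.inl ⟨1, ?_⟩)
      · intro i
        fin_cases i
        · exact Or.inl rfl
        · refine Or.inr ?_
          show (cycleG n₁ □ cycleG n₂).Adj c₂ (r + va n₁ n₂)
          have : r + va n₁ n₂ = c₂ - vb n₁ n₂ := by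
            rw [hI2]
            apply Prod.ext <;> simp [va, vb, uP] <;> push_cast <;> ring
          rw [this]; exact adj_sub_vb h1 h2 c₂
      · simp
    · -- r - va = c₁ + vb : cop1 captures
      refine catch_step (cops' := ![r - va n₁ n₂, c₂]) ?_ (Or.inl ⟨0, ?_⟩)
      · intro i
        fin_cases i
        · refine Or.inr ?_
          show (cycleG n₁ □ cycleG n₂).Adj c₁ (r - va n₁ n₂)
          have : r - va n₁ n₂ = c₁ + vb n₁ n₂ := by
            rw [hI1]
            apply Prod.ext <;> simp [va, vb, uP] <;> push_cast <;> ring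
          rw [this]; exact adj_add_vb h1 h2 c₁
        · exact Or.inl rfl
      · simp
    · -- r + vb = c₂ - va : cop2 captures
      refine catch_step (cops' := ![c₁, r + vb n₁ n₂]) ?_ (Or.inl ⟨1, ?_⟩)
      · intro i
        fin_cases i
        · exact Or.inl rfl
        · refine Or.inr ?_
          show (cycleG n₁ □ cycleG n₂).Adj c₂ (r + vb n₁ n₂)
          have : r + vb n₁ n₂ = c₂ - va n₁ n₂ := by
            rw [hI2]
            apply Prod.ext <;> simp [va, vb, uP] <;> push_cast <;> ring
          rw [this]; exact adj_sub_va h1 h2 c₂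
      · simp
    · -- r - vb = c₁ + va : cop1 captures
      refine catch_step (cops' := ![r - vb n₁ n₂, c₂]) ?_ (Or.inl ⟨0, ?_⟩)
      · intro i
        fin_cases i
        · refine Or.inr ?_
          show (cycleG n₁ □ cycleG n₂).Adj c₁ (r - vb n₁ n₂)
          have : r - vb n₁ n₂ = c₁ + va n₁ n₂ := by
            rw [hI1]
            apply Prod.ext <;> simp [va, vb, uP] <;> push_cast <;> ring
          rw [this]; exact adj_add_va h1 h2 c₁
        · exact Or.inl rfl
      · simp
  | succ Φ ih =>
    intro t k r c₁ c₂ hI1 hI2 hpot r' hadj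
    rcases (adj_iff h1 h2).mp hadj with hm | hm | hm | hm <;> subst hm
    · -- robber played +a
      by_cases hD : r + va n₁ n₂ = c₂ ∨ (cycleG n₁ □ cycleG n₂).Adj c₂ (r + va n₁ n₂)
      · -- cop2 captures
        refine catch_step (cops' := ![c₁, r + va n₁ n₂]) ?_ (Or.inl ⟨1, by simp⟩)
        intro i
        fin_cases i
        · exact Or.inl rfl
        · rcases hD with h | h
          · exact Or.inl (by simpa using h)
          · exact Or.inr (by simpa using h)
      · -- restoration
        match k, hI2 with
        | 0, hI2 =>
          exfalso
          apply hD
          right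
          have : r + va n₁ n₂ = c₂ - vb n₁ n₂ := by
            rw [hI2]
            apply Prod.ext <;> simp [va, vb, uP] <;> push_cast <;> ring
          rw [this]; exact adj_sub_vb h1 h2 c₂
        | (k'+1), hI2 =>
          obtain ⟨t', ht', hup⟩ := rep1 h1 h2 hco (r + va n₁ n₂ - c₁)
          refine catch_step (cops' := ![c₁, c₂ - vb n₁ n₂]) ?_ (Or.inr ?_)
          · intro i
            fin_cases i
            · exact Or.inl rfl
            · exact Or.inr (adj_sub_vb h1 h2 c₂)
          · intro r'' hadj'
            have hI1' : r + va n₁ n₂ = c₁ + uP n₁ n₂ (t'+1) := by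
              rw [hup]; ring
            have hI2' : c₂ - vb n₁ n₂ = (r + va n₁ n₂) + uP n₁ n₂ (k'+1) := by
              rw [hI2]
              apply Prod.ext <;> simp [va, vb, uP] <;> push_cast <;> ring
            have hpot' : t' + (n₁*n₂) * k' ≤ Φ := by nlinarith
            exact ih t' k' (r + va n₁ n₂) c₁ (c₂ - vb n₁ n₂) hI1' hI2' hpot' r'' hadj'
    · -- robber played -a
      by_cases hD : r - va n₁ n₂ = c₁ ∨ (cycleG n₁ □ cycleG n₂).Adj c₁ (r - va n₁ n₂)
      · refine catch_step (cops' := ![r - va n₁ n₂, c₂]) ?_ (Or.inl ⟨0, by simp⟩)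
        intro i
        fin_cases i
        · rcases hD with h | h
          · exact Or.inl (by simpa using h)
          · exact Or.inr (by simpa using h)
        · exact Or.inl rfl
      · match t, hI1 with
        | 0, hI1 =>
          exfalso
          apply hD
          right
          have : r - va n₁ n₂ = c₁ + vb n₁ n₂ := by
            rw [hI1]
            apply Prod.ext <;> simp [va, vb, uP] <;> push_cast <;> ring
          rw [this]; exact adj_add_vb h1 h2 c₁
        | (t'+1), hI1 =>
          refine catch_step (cops' := ![c₁ + vb n₁ n₂, c₂ - va n₁ n₂]) ?_ (Or.inr ?_)
          · intro i
            fin_cases i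
            · exact Or.inr (adj_add_vb h1 h2 c₁)
            · exact Or.inr (adj_sub_va h1 h2 c₂)
          · intro r'' hadj'
            have hI1' : r - va n₁ n₂ = (c₁ + vb n₁ n₂) + uP n₁ n₂ (t'+1) := by
              rw [hI1]
              apply Prod.ext <;> simp [va, vb, uP] <;> push_cast <;> ring
            have hI2' : c₂ - va n₁ n₂ = (r - va n₁ n₂) + uP n₁ n₂ (k+1) := by
              rw [hI2]; ring
            have hpot' : t' + (n₁*n₂) * k ≤ Φ := by omega
            exact ih t' k (r - va n₁ n₂) (c₁ + vb n₁ n₂) (c₂ - va n₁ n₂) hI1' hI2' hpot' r'' hadj'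
    · -- robber played +b
      by_cases hD : r + vb n₁ n₂ = c₂ ∨ (cycleG n₁ □ cycleG n₂).Adj c₂ (r + vb n₁ n₂)
      · refine catch_step (cops' := ![c₁, r + vb n₁ n₂]) ?_ (Or.inl ⟨1, by simp⟩)
        intro i
        fin_cases i
        · exact Or.inl rfl
        · rcases hD with h | h
          · exact Or.inl (by simpa using h)
          · exact Or.inr (by simpa using h)
      · match k, hI2 with
        | 0, hI2 =>
          exfalso
          apply hD
          right
          have : r + vb n₁ n₂ = c₂ - va n₁ n₂ := by
            rw [hI2]
            apply Prod.ext <;> simp [va, vb, uP] <;> push_cast <;> ring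
          rw [this]; exact adj_sub_va h1 h2 c₂
        | (k'+1), hI2 =>
          obtain ⟨t', ht', hup⟩ := rep1 h1 h2 hco (r + vb n₁ n₂ - c₁)
          refine catch_step (cops' := ![c₁, c₂ - va n₁ n₂]) ?_ (Or.inr ?_)
          · intro i
            fin_cases i
            · exact Or.inl rfl
            · exact Or.inr (adj_sub_va h1 h2 c₂)
          · intro r'' hadj'
            have hI1' : r + vb n₁ n₂ = c₁ + uP n₁ n₂ (t'+1) := by
              rw [hup]; ring
            have hI2' : c₂ - va n₁ n₂ = (r + vb n₁ n₂) + uP n₁ n₂ (k'+1) := by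
              rw [hI2]
              apply Prod.ext <;> simp [va, vb, uP] <;> push_cast <;> ring
            have hpot' : t' + (n₁*n₂) * k' ≤ Φ := by nlinarith
            exact ih t' k' (r + vb n₁ n₂) c₁ (c₂ - va n₁ n₂) hI1' hI2' hpot' r'' hadj'
    · -- robber played -b
      by_cases hD : r - vb n₁ n₂ = c₁ ∨ (cycleG n₁ □ cycleG n₂).Adj c₁ (r - vb n₁ n₂)
      · refine catch_step (cops' := ![r - vb n₁ n₂, c₂]) ?_ (Or.inl ⟨0, by simp⟩)
        intro i
        fin_cases i
        · rcases hD with h | h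
          · exact Or.inl (by simpa using h)
          · exact Or.inr (by simpa using h)
        · exact Or.inl rfl
      · match t, hI1 with
        | 0, hI1 =>
          exfalso
          apply hD
          right
          have : r - vb n₁ n₂ = c₁ + va n₁ n₂ := by
            rw [hI1]
            apply Prod.ext <;> simp [va, vb, uP] <;> push_cast <;> ring
          rw [this]; exact adj_add_va h1 h2 c₁
        | (t'+1), hI1 =>
          refine catch_step (cops' := ![c₁ + va n₁ n₂, c₂ - vb n₁ n₂]) ?_ (Or.inr ?_)
          · intro i
            fin_cases i
            · exact Or.inr (adj_add_va h1 h2 c₁)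
            · exact Or.inr (adj_sub_vb h1 h2 c₂)
          · intro r'' hadj'
            have hI1' : r - vb n₁ n₂ = (c₁ + va n₁ n₂) + uP n₁ n₂ (t'+1) := by
              rw [hI1]
              apply Prod.ext <;> simp [va, vb, uP] <;> push_cast <;> ring
            have hI2' : c₂ - vb n₁ n₂ = (r - vb n₁ n₂) + uP n₁ n₂ (k+1) := by
              rw [hI2]; ring
            have hpot' : t' + (n₁*n₂) * k ≤ Φ := by omega
            exact ih t' k (r - vb n₁ n₂) (c₁ + va n₁ n₂) (c₂ - vb n₁ n₂) hI1' hI2' hpot' r'' hadj'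


lemma uP_add (m l : ℕ) : uP n₁ n₂ (m + l) = uP n₁ n₂ m + uP n₁ n₂ l := by
  apply Prod.ext <;> simp [uP] <;> push_cast <;> ring

lemma uP_B : uP n₁ n₂ (n₁ * n₂) = 0 := by
  apply Prod.ext <;> simp [uP]

/-- `near c r` : the cop at `c` threatens `r`. -/
def near (n₁ n₂ : ℕ) (c r : ZMod n₁ × ZMod n₂) : Prop :=
  c = r ∨ (cycleG n₁ □ cycleG n₂).Adj c r

lemma two_ne_zero' (h : 3 ≤ n₁) : (2 : ZMod n₁) ≠ 0 := by
  haveI : NeZero n₁ := ⟨by omega⟩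
  intro hc
  have h2 : ((2:ℕ) : ZMod n₁) = 0 := by push_cast; exact hc
  have := Nat.le_of_dvd (by norm_num) ((ZMod.natCast_eq_zero_iff 2 n₁).mp h2)
  omega

lemma fst_add_va (r : ZMod n₁ × ZMod n₂) : (r + va n₁ n₂).1 = r.1 + 1 := rfl
lemma snd_add_va (r : ZMod n₁ × ZMod n₂) : (r + va n₁ n₂).2 = r.2 := by
  show r.2 + 0 = r.2; ring
lemma fst_sub_va (r : ZMod n₁ × ZMod n₂) : (r - va n₁ n₂).1 = r.1 - 1 := rfl
lemma snd_sub_va (r : ZMod n₁ × ZMod n₂) : (r - va n₁ n₂).2 = r.2 := by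
  show r.2 - 0 = r.2; ring
lemma fst_add_vb (r : ZMod n₁ × ZMod n₂) : (r + vb n₁ n₂).1 = r.1 := by
  show r.1 + 0 = r.1; ring
lemma snd_add_vb (r : ZMod n₁ × ZMod n₂) : (r + vb n₁ n₂).2 = r.2 + 1 := rfl
lemma fst_add_vu (r : ZMod n₁ × ZMod n₂) : (r + vu n₁ n₂).1 = r.1 + 1 := rfl
lemma snd_add_vu (r : ZMod n₁ × ZMod n₂) : (r + vu n₁ n₂).2 = r.2 + 1 := rfl

lemma not_near_diag (h1 : 3 ≤ n₁) (h2 : 3 ≤ n₂) (c : ZMod n₁ × ZMod n₂) :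
    ¬ near n₁ n₂ c (c + vu n₁ n₂) := by
  rintro (h | h)
  · have := congrArg Prod.fst h
    rw [fst_add_vu] at this
    exact one_ne_zero' h1 (left_eq_add.mp this)
  · rw [boxProd_adj] at h
    rcases h with ⟨-, he⟩ | ⟨-, he⟩
    · rw [snd_add_vu] at he
      exact one_ne_zero' h2 (left_eq_add.mp he)
    · rw [fst_add_vu] at he
      exact one_ne_zero' h1 (left_eq_add.mp he)

lemma evade (h1 : 3 ≤ n₁) (h2 : 3 ≤ n₂) {c r c' : ZMod n₁ × ZMod n₂}
    (hnr : ¬ near n₁ n₂ c r) (hc' : c' = c ∨ (cycleG n₁ □ cycleG n₂).Adj c c') :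
    ∃ r', (cycleG n₁ □ cycleG n₂).Adj r r' ∧ ¬ near n₁ n₂ c' r' := by
  have hne : r ≠ c' := by
    rintro rfl
    rcases hc' with rfl | hadj
    · exact hnr (Or.inl rfl)
    · exact hnr (Or.inr hadj)
  by_cases hx : r.1 = c'.1
  · have hy : r.2 ≠ c'.2 := fun hy => hne (Prod.ext hx hy)
    refine ⟨r + va n₁ n₂, adj_add_va h1 h2 r, ?_⟩
    rintro (h | h)
    · have := congrArg Prod.fst h
      rw [fst_add_va, ← hx] at this
      exact one_ne_zero' h1 (left_eq_add.mp this)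
    · rw [boxProd_adj] at h
      rcases h with ⟨-, he⟩ | ⟨-, he⟩
      · rw [snd_add_va] at he
        exact hy he.symm
      · rw [fst_add_va, ← hx] at he
        exact one_ne_zero' h1 (left_eq_add.mp he)
  · by_cases hy : r.2 = c'.2
    · refine ⟨r + vb n₁ n₂, adj_add_vb h1 h2 r, ?_⟩
      rintro (h | h)
      · have := congrArg Prod.snd h
        rw [snd_add_vb, ← hy] at this
        exact one_ne_zero' h2 (left_eq_add.mp this)
      · rw [boxProd_adj] at h
        rcases h with ⟨-, he⟩ | ⟨-, he⟩
        · rw [snd_add_vb, ← hy] at he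
          exact one_ne_zero' h2 (left_eq_add.mp he)
        · rw [fst_add_vb] at he
          exact hx he.symm
    · by_cases hxx : c'.1 = r.1 + 1
      · refine ⟨r - va n₁ n₂, adj_sub_va h1 h2 r, ?_⟩
        rintro (h | h)
        · have := congrArg Prod.snd h
          rw [snd_sub_va] at this
          exact hy this.symm
        · rw [boxProd_adj] at h
          rcases h with ⟨-, he⟩ | ⟨-, he⟩
          · rw [snd_sub_va] at he
            exact hy he.symm
          · rw [fst_sub_va] at he
            exact two_ne_zero' h1 (by linear_combination he - hxx)
      · refine ⟨r + va n₁ n₂, adj_add_va h1 h2 r, ?_⟩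
        rintro (h | h)
        · have := congrArg Prod.snd h
          rw [snd_add_va] at this
          exact hy this.symm
        · rw [boxProd_adj] at h
          rcases h with ⟨-, he⟩ | ⟨-, he⟩
          · rw [snd_add_va] at he
            exact hy he.symm
          · rw [fst_add_va] at he
            exact hxx he

lemma no_catch_one (h1 : 3 ≤ n₁) (h2 : 3 ≤ n₂) :
    ∀ (n : ℕ) (cops : Fin 1 → ZMod n₁ × ZMod n₂) (r : ZMod n₁ × ZMod n₂),
      ¬ near n₁ n₂ (cops 0) r →
      ¬ SemiActiveCanCatch (cycleG n₁ □ cycleG n₂) n cops r := by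
  intro n
  induction n with
  | zero =>
    rintro cops r hnr ⟨i, hi⟩
    have : i = 0 := Subsingleton.elim _ _
    exact hnr (Or.inl (this ▸ hi))
  | succ n ih =>
    rintro cops r hnr (⟨i, hi⟩ | ⟨cops', hleg, hwin⟩)
    · have : i = 0 := Subsingleton.elim _ _
      exact hnr (Or.inl (this ▸ hi))
    · rcases hwin with ⟨i, hi⟩ | hall
      · have hi0 : cops' 0 = r := by
          have : i = 0 := Subsingleton.elim _ _
          exact this ▸ hi
        rcases hleg 0 with h | h
        · exact hnr (Or.inl (h ▸ hi0))
        · exact hnr (Or.inr (hi0 ▸ h))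
      · obtain ⟨r', hadj, hnr'⟩ := evade h1 h2 hnr (hleg 0)
        exact ih cops' r' hnr' (hall r' hadj)

lemma no_catch_zero (h1 : 3 ≤ n₁) (h2 : 3 ≤ n₂) :
    ∀ (n : ℕ) (cops : Fin 0 → ZMod n₁ × ZMod n₂) (r : ZMod n₁ × ZMod n₂),
      ¬ SemiActiveCanCatch (cycleG n₁ □ cycleG n₂) n cops r := by
  intro n
  induction n with
  | zero => rintro cops r ⟨i, -⟩; exact i.elim0
  | succ n ih =>
    rintro cops r (⟨i, -⟩ | ⟨cops', -, hwin⟩)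
    · exact i.elim0
    · rcases hwin with ⟨i, -⟩ | hall
      · exact i.elim0
      · exact ih cops' _ (hall (r + va n₁ n₂) (adj_add_va h1 h2 r))

lemma two_mem (h1 : 3 ≤ n₁) (h2 : 3 ≤ n₂) (hco : Nat.Coprime n₁ n₂) :
    ∃ cops : Fin 2 → ZMod n₁ × ZMod n₂, ∀ r, ∃ n,
      SemiActiveCanCatch (cycleG n₁ □ cycleG n₂) n cops r := by
  refine ⟨![0, 0], fun r => ?_⟩
  by_cases hr : r = 0
  · exact ⟨0, ⟨0, by simp [hr]⟩⟩
  · obtain ⟨s, hs, hz⟩ := gen h1 h2 hco r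
    match s, hz, hs with
    | 0, hz, hs =>
      exfalso
      apply hr
      rw [← hz]
      simp [uP]
    | (t+1), hz, hs =>
      set B := n₁ * n₂ with hBdef
      have hBpos : 1 ≤ B := Nat.one_le_iff_ne_zero.mpr (by positivity)
      refine ⟨t + B * (B - (t+1) - 1) + 2, ?_⟩
      refine catch_step (cops' := ![0, 0]) (fun i => Or.inl rfl) (Or.inr ?_)
      have hI1 : r = 0 + uP n₁ n₂ (t+1) := by rw [hz]; ring
      have hI2 : (0 : ZMod n₁ × ZMod n₂) = r + uP n₁ n₂ ((B - (t+1) - 1) + 1) := by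
        have hsum : (t+1) + ((B - (t+1) - 1) + 1) = B := by omega
        have := uP_add (n₁ := n₁) (n₂ := n₂) (t+1) ((B - (t+1) - 1) + 1)
        rw [hsum] at this
        rw [← hz, ← uP_B (n₁ := n₁) (n₂ := n₂), this]
      exact hunt h1 h2 hco (t + B * (B - (t+1) - 1)) t (B - (t+1) - 1) r 0 0 hI1 hI2 le_rfl

end Statement17

/-- If `n₁, n₂ ≥ 3` are relatively prime, then the semi-active cop number of
`C_{n₁} □ C_{n₂}` is `2`. -/
theorem statement17 (n₁ n₂ : ℕ) (h1 : 3 ≤ n₁) (h2 : 3 ≤ n₂)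
    (hco : Nat.Coprime n₁ n₂) :
    semiActiveCopNumber (cycleG n₁ □ cycleG n₂) = 2 := by
  classical
  rw [semiActiveCopNumber]
  set S := {k : ℕ | ∃ cops : Fin k → ZMod n₁ × ZMod n₂, ∀ r, ∃ n,
    SemiActiveCanCatch (cycleG n₁ □ cycleG n₂) n cops r} with hS
  have hS2 : 2 ∈ S := Statement17.two_mem h1 h2 hco
  have hS0 : 0 ∉ S := by
    rintro ⟨cops, hc⟩
    obtain ⟨n, hn⟩ := hc 0
    exact Statement17.no_catch_zero h1 h2 n cops 0 hn
  have hS1 : 1 ∉ S := by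
    rintro ⟨cops, hc⟩
    obtain ⟨n, hn⟩ := hc (cops 0 + Statement17.vu n₁ n₂)
    exact Statement17.no_catch_one h1 h2 n cops _
      (Statement17.not_near_diag h1 h2 (cops 0)) hn
  have hne : S.Nonempty := ⟨2, hS2⟩
  have hmem := Nat.sInf_mem hne
  have hle : sInf S ≤ 2 := Nat.sInf_le hS2
  have h0 : sInf S ≠ 0 := fun h => hS0 (h ▸ hmem)
  have h1' : sInf S ≠ 1 := fun h => hS1 (h ▸ hmem)
  omega
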